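/- arXiv:1507.05291 — 4 statements merged into one kernel-verified Lean document; each statement's English description precedes it below -/
import Mathlib

section
/- Let 1 ≤ p ≤ 2 and let μ be a measure. For any doubly-indexed family of nonnegative measurable functions a_{ij}, one has ‖(∑_i ∑_j a_{ij})^{1/2}‖_{L^p(μ)} ≤ ∑_j (∑_i ‖a_{ij}^{1/2}‖_{L^p(μ)}^p)^{1/p}. -/
open MeasureTheory ENNReal

/-!
Both exponents `1/2` and `p/2` are at most `1`, so `t ↦ t ^ (1/2)` and `t ↦ t ^ (p/2)` are
subadditive on countable sums. The first turns `(∑ᵢ ∑ⱼ aᵢⱼ) ^ (1/2)` into the larger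
`∑ⱼ (∑ᵢ aᵢⱼ) ^ (1/2)`; Minkowski's inequality in `Lᵖ` (`p ≥ 1`) then splits the norm over `j`;
the second bounds each `‖(∑ᵢ aᵢⱼ) ^ (1/2)‖ₚᵖ = ∫ (∑ᵢ aᵢⱼ) ^ (p/2)` by `∑ᵢ ∫ aᵢⱼ ^ (p/2)`.
-/

namespace ENNReal

lemma iSup_rpow {ι : Sort*} (f : ι → ℝ≥0∞) {q : ℝ} (hq : 0 < q) :
    (⨆ i, f i) ^ q = ⨆ i, f i ^ q :=
  Monotone.map_iSup_of_continuousAt (f := (· ^ q)) continuous_rpow_const.continuousAt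
    (monotone_rpow_of_nonneg hq.le) (zero_rpow_of_pos hq)

lemma rpow_tsum_le_tsum_rpow {ι : Type*} (f : ι → ℝ≥0∞) {q : ℝ} (hq0 : 0 < q) (hq1 : q ≤ 1) :
    (∑' i, f i) ^ q ≤ ∑' i, f i ^ q := by
  rw [ENNReal.tsum_eq_iSup_sum, iSup_rpow _ hq0]
  exact iSup_le fun s => (Finset.le_sum_of_subadditive (· ^ q) (zero_rpow_of_pos hq0).le
    (fun a b => rpow_add_le_add_rpow a b hq0.le hq1) s f).trans (ENNReal.sum_le_tsum s)

variable {X : Type*} [MeasurableSpace X] {μ : Measure X} {ι : Type*} {p : ℝ}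

lemma lintegral_Lp_finsetSum_le {g : ι → X → ℝ≥0∞} (hg : ∀ j, AEMeasurable (g j) μ)
    (hp : 1 ≤ p) (s : Finset ι) :
    (∫⁻ x, (∑ j ∈ s, g j x) ^ p ∂μ) ^ (1 / p) ≤ ∑ j ∈ s, (∫⁻ x, g j x ^ p ∂μ) ^ (1 / p) := by
  simpa [eLpNorm'_eq_lintegral_enorm] using
    eLpNorm'_sum_le (μ := μ) (s := s) (fun j _ => (hg j).aestronglyMeasurable) hp

lemma lintegral_Lp_tsum_le [Countable ι] {g : ι → X → ℝ≥0∞} (hg : ∀ j, AEMeasurable (g j) μ)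
    (hp : 1 ≤ p) :
    (∫⁻ x, (∑' j, g j x) ^ p ∂μ) ^ (1 / p) ≤ ∑' j, (∫⁻ x, g j x ^ p ∂μ) ^ (1 / p) := by
  have hp0 : 0 < p := zero_lt_one.trans_le hp
  simp_rw [ENNReal.tsum_eq_iSup_sum, iSup_rpow _ hp0]
  have partial_sums_directed : Directed (· ≤ ·) fun (s : Finset ι) x => (∑ j ∈ s, g j x) ^ p :=
    Monotone.directed_le fun s t hst x => rpow_le_rpow (Finset.sum_le_sum_of_subset hst) hp0.le
  rw [lintegral_iSup_directed
      (fun s => (s.aemeasurable_fun_sum fun j _ => hg j).pow_const p) partial_sums_directed,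
    iSup_rpow _ (one_div_pos.2 hp0)]
  exact iSup_mono fun s => lintegral_Lp_finsetSum_le hg hp s

end ENNReal

/-- The `Lᵖ` norms are written with `ℝ≥0∞`-valued functions and `lintegral`s:
`‖g ^ (1/2)‖_{Lᵖ} = (∫⁻ g ^ (p/2)) ^ (1/p)`. -/
theorem lp_sqrt_double_sum_bound {X : Type*} [MeasurableSpace X] (μ : Measure X)
    (p : ℝ) (hp1 : 1 ≤ p) (hp2 : p ≤ 2)
    (a : ℕ → ℕ → X → ℝ≥0∞) (ha : ∀ i j, Measurable (a i j)) :
    (∫⁻ x, (∑' i, ∑' j, a i j x) ^ (p / 2) ∂μ) ^ (1 / p) ≤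
      ∑' j, (∑' i, (∫⁻ x, (a i j x) ^ (p / 2) ∂μ)) ^ (1 / p) := by
  have sqrt_rpow (y : ℝ≥0∞) : (y ^ (1 / 2 : ℝ)) ^ p = y ^ (p / 2) := by
    rw [← rpow_mul]; ring_nf
  have sqrt_column_aemeasurable (j : ℕ) :
      AEMeasurable (fun x => (∑' i, a i j x) ^ (1 / 2 : ℝ)) μ :=
    ((Measurable.tsum fun i => ha i j).pow_const _).aemeasurable
  calc (∫⁻ x, (∑' i, ∑' j, a i j x) ^ (p / 2) ∂μ) ^ (1 / p)
      ≤ (∫⁻ x, (∑' j, (∑' i, a i j x) ^ (1 / 2 : ℝ)) ^ p ∂μ) ^ (1 / p) := by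
        gcongr with x
        rw [ENNReal.tsum_comm, ← sqrt_rpow]
        gcongr
        exact rpow_tsum_le_tsum_rpow _ (by norm_num) (by norm_num)
    _ ≤ ∑' j, (∫⁻ x, ((∑' i, a i j x) ^ (1 / 2 : ℝ)) ^ p ∂μ) ^ (1 / p) :=
        lintegral_Lp_tsum_le sqrt_column_aemeasurable hp1
    _ ≤ ∑' j, (∑' i, ∫⁻ x, a i j x ^ (p / 2) ∂μ) ^ (1 / p) := by
        gcongr with j
        simp_rw [sqrt_rpow]
        rw [← lintegral_tsum fun i => ((ha i j).pow_const _).aemeasurable]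
        gcongr with x
        exact rpow_tsum_le_tsum_rpow _ (by positivity) (by linarith)
end

section
/- If Q, R are cubes with side lengths ℓ(R) = 2^i ℓ(Q), relative distance D(Q,R)/ℓ(R) ∼ 2^j (meaning 2^j < D(Q,R)/ℓ(R) ≤ 2^{j+1}), where i ≥ 1, j ≥ 0, and S has side length ℓ(S) = 2^{i+j+θ(j)} ℓ(Q) with θ(j) = ⌈(jγ+r)/(1-γ)⌉, and if mγ/(1-γ) ≤ α/4, then ℓ(Q)^α / D(Q,R)^{m+α} ≲ 2^{-α(i + 3j/4)} ℓ(S)^{-m}, with implied constant depending only on m, α, γ, r. -/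
/-!
Since `D > 2^j ℓR = 2^{i+j} ℓQ`, the left side is at most `2^{-(i+j)(m+α)} ℓQ^{-m}`, while
`ℓS^{-m} = 2^{-m(i+j+θ(j))} ℓQ^{-m}`. Comparing exponents of `2`, it remains to bound
`m θ(j) - α j / 4`, and `m θ(j) ≤ j · mγ/(1-γ) + m (r/(1-γ) + 1) ≤ α j / 4 + m (r/(1-γ) + 1)`.
-/

open Real

lemma rpow_mul_rpow_eq {b x : ℝ} (hb : 0 ≤ b) (hx : 0 ≤ x) (a p : ℝ) :
    (b ^ a * x) ^ p = b ^ (a * p) * x ^ p := by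
  rw [mul_rpow (rpow_nonneg hb a) hx, ← rpow_mul hb]

lemma rpow_div_rpow_mul_rpow_add {b x : ℝ} (hb : 0 ≤ b) (hx : 0 < x) (a m α : ℝ) :
    x ^ α / (b ^ a * x) ^ (m + α) = b ^ (-(a * (m + α))) * x ^ (-m) := by
  rw [rpow_mul_rpow_eq hb hx.le, rpow_neg hb, div_mul_eq_div_div_swap, ← rpow_sub hx,
    sub_add_cancel_right, div_eq_inv_mul]

lemma two_rpow_add_mul_lt {i j : ℕ} {ℓQ ℓR D : ℝ} (hQ : 0 < ℓQ) (hR : ℓR = 2 ^ i * ℓQ)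
    (hjD : (2 : ℝ) ^ j < D / ℓR) : (2 : ℝ) ^ ((i : ℝ) + j) * ℓQ < D := by
  have hRpos : 0 < ℓR := by rw [hR]; positivity
  rw [lt_div_iff₀ hRpos, hR] at hjD
  rw [rpow_add two_pos, rpow_natCast, rpow_natCast]
  linarith

lemma mul_ceil_le_of_mul_div_le {m α γ r j : ℝ} (hm : 0 ≤ m) (hγ : γ < 1) (hj : 0 ≤ j)
    (hγα : m * γ / (1 - γ) ≤ α / 4) :
    m * ⌈(j * γ + r) / (1 - γ)⌉ ≤ α * j / 4 + m * (r / (1 - γ) + 1) := by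
  have hγ1 : 0 < 1 - γ := by linarith
  have hsplit : m * ((j * γ + r) / (1 - γ)) = j * (m * γ / (1 - γ)) + m * (r / (1 - γ)) := by
    field_simp
  have hceil := mul_le_mul_of_nonneg_left (Int.ceil_lt_add_one ((j * γ + r) / (1 - γ))).le hm
  linarith [mul_le_mul_of_nonneg_left hγα hj]

theorem cube_distance_estimate_general (m α γ : ℝ) (r : ℕ) (hm : 0 < m) (hα : 0 < α)
    (hγ : γ < 1 / 2) (hγα : m * γ / (1 - γ) ≤ α / 4) :
    ∃ C : ℝ, 0 < C ∧ ∀ (i j : ℕ) (ℓQ d : ℝ), 1 ≤ i → 0 < ℓQ → 0 ≤ d →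
      (∀ ℓR D ℓS : ℝ, ℓR = 2 ^ i * ℓQ → D = ℓQ + ℓR + d →
        ℓS = 2 ^ ((i : ℝ) + j + ⌈((j : ℝ) * γ + r) / (1 - γ)⌉) * ℓQ →
        (2 : ℝ) ^ j < D / ℓR → D / ℓR ≤ 2 ^ (j + 1) →
        ℓQ ^ α / D ^ (m + α) ≤
          C * (2 : ℝ) ^ (-α * ((i : ℝ) + 3 * (j : ℝ) / 4)) * ℓS ^ (-m)) := by
  refine ⟨2 ^ (m * (r / (1 - γ) + 1)), by positivity, ?_⟩
  intro i j ℓQ d _ hQ _ ℓR D ℓS hR _ hS hjD _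
  have hD := two_rpow_add_mul_lt hQ hR hjD
  have hθ := mul_ceil_le_of_mul_div_le (r := r) hm.le (by linarith) (Nat.cast_nonneg j) hγα
  calc ℓQ ^ α / D ^ (m + α) ≤ ℓQ ^ α / ((2 : ℝ) ^ ((i : ℝ) + j) * ℓQ) ^ (m + α) := by
        gcongr
    _ = (2 : ℝ) ^ (-(((i : ℝ) + j) * (m + α))) * ℓQ ^ (-m) :=
        rpow_div_rpow_mul_rpow_add zero_le_two hQ _ _ _
    _ ≤ (2 : ℝ) ^ (m * (r / (1 - γ) + 1) + -α * ((i : ℝ) + 3 * (j : ℝ) / 4)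
          + ((i : ℝ) + j + ⌈((j : ℝ) * γ + r) / (1 - γ)⌉) * (-m)) * ℓQ ^ (-m) := by
        gcongr
        · exact one_le_two
        · linarith
    _ = _ := by
        rw [hS, rpow_mul_rpow_eq zero_le_two hQ.le, rpow_add two_pos, rpow_add two_pos]
        ring

/-- Lemma 4.1 (key geometric estimate), abstract form. Cubes are encoded by their side
lengths `ℓQ`, `ℓR = 2^i ℓQ`, mutual distance `d ≥ 0`, `D = ℓQ + ℓR + d`, and
`ℓS = 2^{i+j+θ(j)} ℓQ` with `θ(j) = ⌈(jγ+r)/(1-γ)⌉`.  If `2^j < D/ℓR ≤ 2^{j+1}` and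
`mγ/(1-γ) ≤ α/4` then `ℓQ^α / D^{m+α} ≲ 2^{-α(i+3j/4)} ℓS^{-m}`, the implied constant
depending only on `m, α, γ, r`. -/
theorem cube_distance_estimate (m α γ : ℝ) (r : ℕ) (hm : 0 < m) (hα : 0 < α)
    (hγ0 : 0 < γ) (hγ : γ < 1 / 2) (hr : 0 < r) (hγα : m * γ / (1 - γ) ≤ α / 4) :
    ∃ C : ℝ, 0 < C ∧ ∀ (i j : ℕ) (ℓQ d : ℝ), 1 ≤ i → 0 < ℓQ → 0 ≤ d →
      (∀ ℓR D ℓS : ℝ, ℓR = 2 ^ i * ℓQ → D = ℓQ + ℓR + d →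
        ℓS = 2 ^ ((i : ℝ) + j + ⌈((j : ℝ) * γ + r) / (1 - γ)⌉) * ℓQ →
        (2 : ℝ) ^ j < D / ℓR → D / ℓR ≤ 2 ^ (j + 1) →
        ℓQ ^ α / D ^ (m + α) ≤
          C * (2 : ℝ) ^ (-α * ((i : ℝ) + 3 * (j : ℝ) / 4)) * ℓS ^ (-m)) :=
  cube_distance_estimate_general m α γ r hm hα hγ hγα
end

section
/- Let Q, R be cubes with ℓ(Q) = 2^i ℓ(R), i ≥ 0, satisfying the separation condition d(Q,R) > ℓ(R)^γ ℓ(Q)^{1-γ}, where γ ≤ α/(2(m+α)). Then ℓ(R)^α / (ℓ(R) + d(Q,R))^{m+α} ≲ ℓ(Q)^{α/2} ℓ(R)^{α/2} / D(Q,R)^{m+α}. -/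
/-- Separation estimate: if `ℓQ = 2^i ℓR` and `d > ℓR^γ ℓQ^{1-γ}` with
`γ ≤ α/(2(m+α))`, then `ℓR^α/(ℓR+d)^{m+α} ≲ ℓQ^{α/2} ℓR^{α/2} / D^{m+α}`,
where `D = ℓQ + ℓR + d`; the implied constant depends only on `m, α, γ`. -/
theorem separated_cubes_estimate (m α γ : ℝ) (hm : 0 < m) (hα : 0 < α)
    (hγ0 : 0 < γ) (hγhalf : γ < 1 / 2) (hγ : γ ≤ α / (2 * (m + α))) :
    ∃ C : ℝ, 0 < C ∧ ∀ (i : ℕ) (ℓR d : ℝ), 0 < ℓR → 0 ≤ d →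
      ∀ ℓQ D : ℝ, ℓQ = 2 ^ i * ℓR → D = ℓQ + ℓR + d →
        d > ℓR ^ γ * ℓQ ^ (1 - γ) →
        ℓR ^ α / (ℓR + d) ^ (m + α) ≤
          C * (ℓQ ^ (α / 2) * ℓR ^ (α / 2) / D ^ (m + α)) := by
  refine ⟨(2 : ℝ) ^ (m + α), by positivity, ?_⟩
  intro i ℓR d hR hd ℓQ D hQ hD hsep
  set t : ℝ := 2 ^ i with ht
  have htpos : (0 : ℝ) < t := by positivity
  have ht1 : (1 : ℝ) ≤ t := one_le_pow₀ (by norm_num)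
  have hQpos : 0 < ℓQ := by rw [hQ]; positivity
  have hma : 0 < m + α := by linarith
  -- rewrite separation condition
  have h1 : ℓR ^ γ * ℓQ ^ (1 - γ) = t ^ (1 - γ) * ℓR := by
    rw [hQ, Real.mul_rpow htpos.le hR.le]
    rw [show ℓR ^ γ * (t ^ (1 - γ) * ℓR ^ (1 - γ)) =
      t ^ (1 - γ) * (ℓR ^ γ * ℓR ^ (1 - γ)) by ring,
      ← Real.rpow_add hR]
    norm_num
  have htγpos : (0 : ℝ) < t ^ γ := Real.rpow_pos_of_pos htpos _
  have hQle : ℓQ ≤ d * t ^ γ := by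
    have h2 : t ^ (1 - γ) * ℓR * t ^ γ = ℓQ := by
      rw [show t ^ (1 - γ) * ℓR * t ^ γ = t ^ (1 - γ) * t ^ γ * ℓR by ring,
        ← Real.rpow_add htpos]
      norm_num [hQ]
    nlinarith [hsep, h1]
  have htγ1 : (1 : ℝ) ≤ t ^ γ := Real.one_le_rpow ht1 hγ0.le
  have hDle : D ≤ 2 * t ^ γ * (ℓR + d) := by
    rw [hD]; nlinarith
  have hDpos : 0 < D := by rw [hD]; positivity
  have hRd : 0 < ℓR + d := by linarith
  -- power bound
  have hexp : γ * (m + α) ≤ α / 2 := by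
    rw [le_div_iff₀ (by positivity)] at hγ
    nlinarith
  have htexp : t ^ (γ * (m + α)) ≤ t ^ (α / 2) :=
    Real.rpow_le_rpow_of_exponent_le ht1 hexp
  have hDpow : D ^ (m + α) ≤ 2 ^ (m + α) * t ^ (α / 2) * (ℓR + d) ^ (m + α) := by
    calc D ^ (m + α) ≤ (2 * t ^ γ * (ℓR + d)) ^ (m + α) :=
          Real.rpow_le_rpow hDpos.le hDle hma.le
      _ = 2 ^ (m + α) * (t ^ γ) ^ (m + α) * (ℓR + d) ^ (m + α) := by
          rw [Real.mul_rpow (by positivity) hRd.le, Real.mul_rpow (by norm_num) htγpos.le]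
      _ = 2 ^ (m + α) * t ^ (γ * (m + α)) * (ℓR + d) ^ (m + α) := by
          rw [← Real.rpow_mul htpos.le]
      _ ≤ 2 ^ (m + α) * t ^ (α / 2) * (ℓR + d) ^ (m + α) := by
          gcongr
  have hQR : ℓQ ^ (α / 2) * ℓR ^ (α / 2) = t ^ (α / 2) * ℓR ^ α := by
    rw [hQ, Real.mul_rpow htpos.le hR.le, mul_assoc, ← Real.rpow_add hR]
    norm_num
  rw [mul_div_assoc', div_le_div_iff₀ (by positivity) (by positivity), hQR]
  calc ℓR ^ α * D ^ (m + α)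
      ≤ ℓR ^ α * (2 ^ (m + α) * t ^ (α / 2) * (ℓR + d) ^ (m + α)) := by
        gcongr
    _ = 2 ^ (m + α) * (t ^ (α / 2) * ℓR ^ α) * (ℓR + d) ^ (m + α) := by ring
end

section
/- Let μ be a Borel measure on ℝⁿ with μ(B(x,r)) ≲ r^m, let λ > 2, 0 < α ≤ m(λ−2)/2, and let s_t be a kernel with size bound |s_t(x,y)| ≲ t^α/(t+|x−y|)^{m+α}. Define θ_t f(y) = ∫ s_t(y,z) f(z) dμ(z). Then for every x ∈ ℝⁿ and t > 0, (∫_{ℝⁿ} (t/(t+|x−y|))^{mλ} |θ_t f(y)|² dμ(y)/t^m)^{1/2} ≲ M_μ f(x). -/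
open MeasureTheory
open scoped ENNReal NNReal

noncomputable section

/-- The centered Hardy–Littlewood maximal function with respect to `μ`. -/
def centeredMaximal {n : ℕ} (μ : Measure (Fin n → ℝ)) (f : (Fin n → ℝ) → ℂ)
    (x : Fin n → ℝ) : ℝ≥0∞ :=
  ⨆ (r : ℝ) (_ : 0 < r),
    (μ (Metric.ball x r))⁻¹ * ∫⁻ z in Metric.ball x r, ‖f z‖₊ ∂μ

/-!
Put `Θ(y) = t⁻ᵐ ∫ (t / (t + |y - z|))^(m+α) |f z| dμ(z)`, so that `|θ_t f(y)| ≤ C Θ(y)`.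
Decomposing into dyadic annuli, balls of radius `r ≥ t` around `y` sit in balls of radius
`r (t + |x - y|) / t` around `x`, whence `Θ(y) ≲ ((t + |x - y|) / t)^m M_μ f(x)`. Spending this
bound on one factor of `|θ_t f(y)|²` turns the weight `(t / (t + |x - y|))^(mλ)` into
`(t / (t + |x - y|))^(m + β)` with `β = m(λ - 2) ≥ α`. After Tonelli, the convolution of this
weight with the kernel is `≲ (t / (t + |x - z|))^(m+α)`, and a last dyadic decomposition around `x`
bounds the remaining integral of `|f|` by `t^m M_μ f(x)`.
-/

open Metric

def decayWeight {X : Type*} [PseudoMetricSpace X] (t e : ℝ) (x y : X) : ℝ≥0∞ :=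
  ENNReal.ofReal ((t / (t + dist x y)) ^ e)

def dyadicSum (δ : ℝ) : ℝ≥0∞ := ∑' k : ℕ, ENNReal.ofReal (2 ^ (-δ)) ^ k

lemma dyadicSum_ne_top {δ : ℝ} (hδ : 0 < δ) : dyadicSum δ ≠ ∞ := by
  have hlt : ENNReal.ofReal (2 ^ (-δ)) < 1 :=
    ENNReal.ofReal_lt_one.2 (Real.rpow_lt_one_of_one_lt_of_neg one_lt_two (neg_neg_of_pos hδ))
  rw [dyadicSum, ENNReal.tsum_geometric]
  exact ENNReal.inv_ne_top.2 (tsub_pos_of_lt hlt).ne'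

lemma two_rpow_neg_add_pow_mul {R : ℝ} (hR : 0 < R) (m δ : ℝ) (k : ℕ) :
    ((2 : ℝ) ^ (-(m + δ))) ^ k * (2 ^ (k + 1) * R) ^ m = 2 ^ m * R ^ m * (2 ^ (-δ)) ^ k := by
  have hsplit : ((2 : ℝ) ^ (k + 1) * R) ^ m = 2 ^ ((k + 1) * m) * R ^ m := by
    rw [Real.mul_rpow (by positivity) hR.le, ← Real.rpow_natCast, ← Real.rpow_mul zero_le_two]
    push_cast; ring_nf
  rw [hsplit, ← Real.rpow_mul_natCast zero_le_two, ← Real.rpow_mul_natCast zero_le_two,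
    ← mul_assoc, ← Real.rpow_add two_pos, mul_comm (2 ^ m : ℝ), mul_assoc,
    ← Real.rpow_add two_pos, mul_comm]
  ring_nf

section DecayWeight

variable {X : Type*} [PseudoMetricSpace X] {t e : ℝ}

lemma decayWeight_ne_top (t e : ℝ) (x y : X) : decayWeight t e x y ≠ ∞ := ENNReal.ofReal_ne_top

lemma decayWeight_comm (t e : ℝ) (x y : X) : decayWeight t e x y = decayWeight t e y x := by
  rw [decayWeight, decayWeight, dist_comm]

lemma decayWeight_self (ht : t ≠ 0) (e : ℝ) (x : X) : decayWeight t e x x = 1 := by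
  simp [decayWeight, ht]

lemma decayWeight_mul (ht : 0 < t) (a b : ℝ) (x y : X) :
    decayWeight t a x y * decayWeight t b x y = decayWeight t (a + b) x y := by
  rw [decayWeight, decayWeight, decayWeight, ← ENNReal.ofReal_mul (by positivity),
    ← Real.rpow_add (by positivity)]

lemma decayWeight_anti (ht : 0 < t) {a b : ℝ} (hab : a ≤ b) (x y : X) :
    decayWeight t b x y ≤ decayWeight t a x y :=
  ENNReal.ofReal_le_ofReal <| Real.rpow_le_rpow_of_exponent_ge (by positivity)
    (div_le_one_of_le₀ (by linarith [dist_nonneg (x := x) (y := y)]) (by positivity)) hab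

lemma decayWeight_le_of_dist_le (ht : 0 < t) (he : 0 ≤ e) {x y z : X}
    (h : dist x z ≤ 2 * dist x y) :
    decayWeight t e x y ≤ ENNReal.ofReal (2 ^ e) * decayWeight t e x z := by
  have hxz := dist_nonneg (x := x) (y := z)
  have hbase : t / (t + dist x y) ≤ 2 * (t / (t + dist x z)) := by
    rw [← mul_div_assoc, div_le_div_iff₀ (by positivity) (by positivity)]
    nlinarith
  rw [decayWeight, decayWeight, ← ENNReal.ofReal_mul (by positivity),
    ← Real.mul_rpow zero_le_two (by positivity)]
  exact ENNReal.ofReal_le_ofReal (Real.rpow_le_rpow (by positivity) hbase he)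

lemma continuous_decayWeight (ht : 0 < t) (e : ℝ) :
    Continuous fun p : X × X => decayWeight t e p.1 p.2 :=
  ENNReal.continuous_ofReal.comp <|
    (continuous_const.div (continuous_const.add continuous_dist) fun _ =>
      (add_pos_of_pos_of_nonneg ht dist_nonneg).ne').rpow_const
      fun _ => Or.inl (div_pos ht (add_pos_of_pos_of_nonneg ht dist_nonneg)).ne'

lemma continuous_decayWeight_right (ht : 0 < t) (e : ℝ) (c : X) : Continuous (decayWeight t e c) :=
  (continuous_decayWeight ht e).comp (Continuous.prodMk_right c)

lemma exists_dist_lt_and_decayWeight_le {R : ℝ} (hR : 0 < R) (he : 0 ≤ e) (c y : X) :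
    ∃ k : ℕ, dist c y < 2 ^ (k + 1) * R ∧ decayWeight R e c y ≤ ENNReal.ofReal (2 ^ (-e)) ^ k := by
  have hd := dist_nonneg (x := c) (y := y)
  obtain ⟨k, hk, hk'⟩ := exists_nat_pow_near (x := (R + dist c y) / R) (y := (2 : ℝ))
    ((one_le_div hR).2 (by linarith)) one_lt_two
  rw [le_div_iff₀ hR] at hk
  rw [div_lt_iff₀ hR] at hk'
  refine ⟨k, by linarith, ?_⟩
  have hbase : R / (R + dist c y) ≤ ((2 : ℝ) ^ k)⁻¹ := by
    rw [div_le_iff₀ (by positivity)]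
    field_simp
    linarith
  rw [decayWeight, ← ENNReal.ofReal_pow (by positivity)]
  refine ENNReal.ofReal_le_ofReal ((Real.rpow_le_rpow (by positivity) hbase he).trans_eq ?_)
  rw [Real.inv_rpow (by positivity), ← Real.rpow_natCast_mul zero_le_two, mul_comm,
    Real.rpow_mul_natCast zero_le_two, Real.rpow_neg zero_le_two, inv_pow]

end DecayWeight

section BallGrowth

variable {X : Type*} [PseudoMetricSpace X] [MeasurableSpace X] {μ : Measure X} {C m t : ℝ}

lemma enorm_integral_mul_le_of_norm_le {s : X → X → ℂ} {f : X → ℂ} {α : ℝ} (ht : 0 < t)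
    (hs : ∀ y z, ‖s y z‖ ≤ C * t ^ α / (t + dist y z) ^ (m + α)) (y : X) :
    ‖∫ z, s y z * f z ∂μ‖ₑ ≤ ENNReal.ofReal C / ENNReal.ofReal (t ^ m) *
      ∫⁻ z, decayWeight t (m + α) y z * ‖f z‖ₑ ∂μ := by
  have hker : ∀ z, ‖s y z‖ₑ ≤
      ENNReal.ofReal C / ENNReal.ofReal (t ^ m) * decayWeight t (m + α) y z := fun z => by
      rw [← ofReal_norm, decayWeight, ← ENNReal.ofReal_div_of_pos (by positivity),
        ← ENNReal.ofReal_mul' (by positivity)]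
      refine ENNReal.ofReal_le_ofReal ((hs y z).trans_eq ?_)
      rw [Real.div_rpow ht.le (by positivity), Real.rpow_add ht]
      field_simp
  calc ‖∫ z, s y z * f z ∂μ‖ₑ ≤ ∫⁻ z, ‖s y z * f z‖ₑ ∂μ := enorm_integral_le_lintegral_enorm _
    _ ≤ ∫⁻ z, ENNReal.ofReal C / ENNReal.ofReal (t ^ m) *
          (decayWeight t (m + α) y z * ‖f z‖ₑ) ∂μ := lintegral_mono fun z => by
        rw [enorm_mul, ← mul_assoc]
        gcongr
        exact hker z
    _ = _ := lintegral_const_mul' _ _ (ENNReal.div_ne_top ENNReal.ofReal_ne_top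
        (ENNReal.ofReal_pos.2 (by positivity)).ne')

variable [OpensMeasurableSpace X]

/-- Splitting into the dyadic annuli `2^k R ≤ dist c y < 2^(k+1) R`, a weight of order `m + δ`
sums the growth `r^m` of `g` over balls to a geometric series of ratio `2^(-δ)`. -/
lemma lintegral_decayWeight_mul_le {g : X → ℝ≥0∞} (hg : AEMeasurable g μ) {c : X}
    {R δ : ℝ} {A : ℝ≥0∞} (hR : 0 < R) (he : 0 ≤ m + δ)
    (hA : ∀ r, R ≤ r → ∫⁻ y in ball c r, g y ∂μ ≤ A * ENNReal.ofReal (r ^ m)) :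
    ∫⁻ y, decayWeight R (m + δ) c y * g y ∂μ ≤
      A * ENNReal.ofReal (2 ^ m) * ENNReal.ofReal (R ^ m) * dyadicSum δ := by
  set q := ENNReal.ofReal (2 ^ (-(m + δ)))
  have hpt : ∀ y, decayWeight R (m + δ) c y * g y ≤
      ∑' k : ℕ, q ^ k * (ball c (2 ^ (k + 1) * R)).indicator g y := fun y => by
    obtain ⟨k, hk, hw⟩ := exists_dist_lt_and_decayWeight_le hR he c y
    have hy : y ∈ ball c (2 ^ (k + 1) * R) := by rwa [mem_ball, dist_comm]
    calc decayWeight R (m + δ) c y * g y ≤ q ^ k * (ball c (2 ^ (k + 1) * R)).indicator g y := by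
          rw [Set.indicator_of_mem hy]; gcongr
      _ ≤ _ := ENNReal.le_tsum k
  have hterm : ∀ k : ℕ, q ^ k * ENNReal.ofReal ((2 ^ (k + 1) * R) ^ m) =
      ENNReal.ofReal (2 ^ m) * ENNReal.ofReal (R ^ m) * ENNReal.ofReal (2 ^ (-δ)) ^ k := fun k => by
    rw [← ENNReal.ofReal_pow (by positivity), ← ENNReal.ofReal_pow (by positivity),
      ← ENNReal.ofReal_mul (by positivity), ← ENNReal.ofReal_mul (by positivity),
      ← ENNReal.ofReal_mul (by positivity), two_rpow_neg_add_pow_mul hR]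
  calc ∫⁻ y, decayWeight R (m + δ) c y * g y ∂μ
      ≤ ∫⁻ y, ∑' k : ℕ, q ^ k * (ball c (2 ^ (k + 1) * R)).indicator g y ∂μ := lintegral_mono hpt
    _ = ∑' k : ℕ, q ^ k * ∫⁻ y in ball c (2 ^ (k + 1) * R), g y ∂μ := by
      rw [lintegral_tsum fun k => (hg.indicator measurableSet_ball).const_mul _]
      congr 1 with k
      rw [lintegral_const_mul' _ _ (by simp [q]), lintegral_indicator measurableSet_ball]
    _ ≤ ∑' k : ℕ, A * (q ^ k * ENNReal.ofReal ((2 ^ (k + 1) * R) ^ m)) := by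
      refine ENNReal.tsum_le_tsum fun k => ?_
      rw [mul_left_comm]
      exact mul_le_mul_right (hA _ (le_mul_of_one_le_left hR.le (one_le_pow₀ one_le_two))) _
    _ = A * ENNReal.ofReal (2 ^ m) * ENNReal.ofReal (R ^ m) * dyadicSum δ := by
      simp_rw [hterm, ← mul_assoc]
      rw [ENNReal.tsum_mul_left, dyadicSum]

lemma lintegral_decayWeight_le
    (hμ : ∀ (c : X) (r : ℝ), 0 < r → μ (ball c r) ≤ ENNReal.ofReal (C * r ^ m))
    (ht : 0 < t) {δ : ℝ} (he : 0 ≤ m + δ) (c : X) :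
    ∫⁻ y, decayWeight t (m + δ) c y ∂μ ≤
      ENNReal.ofReal C * ENNReal.ofReal (2 ^ m) * ENNReal.ofReal (t ^ m) * dyadicSum δ := by
  simpa using lintegral_decayWeight_mul_le (g := 1) aemeasurable_const ht he fun r hr => by
    simpa [ENNReal.ofReal_mul' (Real.rpow_nonneg (ht.le.trans hr) m)] using
      hμ c r (ht.trans_le hr)

/-- One of `dist x y`, `dist y z` is at least `dist x z / 2`, and there the corresponding factor
is at most `2 ^ (m + α) * decayWeight t (m + α) x z`. -/
lemma lintegral_decayWeight_mul_decayWeight_le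
    (hμ : ∀ (c : X) (r : ℝ), 0 < r → μ (ball c r) ≤ ENNReal.ofReal (C * r ^ m))
    (ht : 0 < t) {α β : ℝ} (he : 0 ≤ m + α) (hαβ : α ≤ β) (x z : X) :
    ∫⁻ y, decayWeight t (m + β) x y * decayWeight t (m + α) y z ∂μ ≤
      ENNReal.ofReal (2 ^ (m + α)) * (ENNReal.ofReal C * ENNReal.ofReal (2 ^ m) *
        ENNReal.ofReal (t ^ m) * (dyadicSum α + dyadicSum β)) * decayWeight t (m + α) x z := by
  have hpt : ∀ y, decayWeight t (m + β) x y * decayWeight t (m + α) y z ≤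
      ENNReal.ofReal (2 ^ (m + α)) * decayWeight t (m + α) x z *
        (decayWeight t (m + α) z y + decayWeight t (m + β) x y) := fun y => by
    rw [decayWeight_comm t _ y z, mul_add]
    rcases le_total (dist x z) (2 * dist x y) with h | h
    · calc decayWeight t (m + β) x y * decayWeight t (m + α) z y
          ≤ decayWeight t (m + α) x y * decayWeight t (m + α) z y := by
            gcongr; exact decayWeight_anti ht (by linarith) x y
        _ ≤ _ := by gcongr; exact decayWeight_le_of_dist_le ht he h
        _ ≤ _ := le_self_add
    · have h' : dist z x ≤ 2 * dist z y := by
        linarith [dist_triangle x y z, dist_comm x z, dist_comm y z]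
      calc decayWeight t (m + β) x y * decayWeight t (m + α) z y
          ≤ decayWeight t (m + β) x y *
              (ENNReal.ofReal (2 ^ (m + α)) * decayWeight t (m + α) x z) := by
            gcongr
            rw [decayWeight_comm t _ x z]
            exact decayWeight_le_of_dist_le ht he h'
        _ = _ := mul_comm _ _
        _ ≤ _ := le_add_self
  calc ∫⁻ y, decayWeight t (m + β) x y * decayWeight t (m + α) y z ∂μ
      ≤ ∫⁻ y, ENNReal.ofReal (2 ^ (m + α)) * decayWeight t (m + α) x z *
          (decayWeight t (m + α) z y + decayWeight t (m + β) x y) ∂μ := lintegral_mono hpt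
    _ = ENNReal.ofReal (2 ^ (m + α)) * decayWeight t (m + α) x z *
          (∫⁻ y, decayWeight t (m + α) z y ∂μ + ∫⁻ y, decayWeight t (m + β) x y ∂μ) := by
      rw [lintegral_const_mul' _ _
          (ENNReal.mul_ne_top ENNReal.ofReal_ne_top (decayWeight_ne_top _ _ _ _)),
        lintegral_add_left (continuous_decayWeight_right ht _ z).measurable]
    _ ≤ ENNReal.ofReal (2 ^ (m + α)) * decayWeight t (m + α) x z *
          (ENNReal.ofReal C * ENNReal.ofReal (2 ^ m) * ENNReal.ofReal (t ^ m) * dyadicSum α +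
            ENNReal.ofReal C * ENNReal.ofReal (2 ^ m) * ENNReal.ofReal (t ^ m) * dyadicSum β) := by
      gcongr
      exacts [lintegral_decayWeight_le hμ ht he z,
        lintegral_decayWeight_le hμ ht (by linarith) x]
    _ = _ := by ring

end BallGrowth

section Maximal

variable {n : ℕ} {μ : Measure (Fin n → ℝ)} {f : (Fin n → ℝ) → ℂ} {C m t : ℝ}

lemma setLIntegral_ball_le_measure_mul_centeredMaximal (x : Fin n → ℝ) {r : ℝ} (hr : 0 < r)
    (hfin : μ (ball x r) ≠ ∞) :
    ∫⁻ z in ball x r, ‖f z‖ₑ ∂μ ≤ μ (ball x r) * centeredMaximal μ f x := by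
  rcases eq_or_ne (μ (ball x r)) 0 with h0 | h0
  · simp [Measure.restrict_eq_zero.2 h0]
  calc ∫⁻ z in ball x r, ‖f z‖ₑ ∂μ
      = μ (ball x r) * ((μ (ball x r))⁻¹ * ∫⁻ z in ball x r, ‖f z‖ₑ ∂μ) := by
        rw [← mul_assoc, ENNReal.mul_inv_cancel h0 hfin, one_mul]
    _ ≤ μ (ball x r) * centeredMaximal μ f x :=
        mul_le_mul_right (le_iSup₂ (f := fun r (_ : 0 < r) =>
          (μ (ball x r))⁻¹ * ∫⁻ z in ball x r, ‖f z‖ₑ ∂μ) r hr) _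

lemma lintegral_decayWeight_mul_enorm_le_centeredMaximal
    (hμ : ∀ (c : Fin n → ℝ) (r : ℝ), 0 < r → μ (ball c r) ≤ ENNReal.ofReal (C * r ^ m))
    (hf : AEMeasurable (fun z => ‖f z‖ₑ) μ) (ht : 0 < t) (hm : 0 ≤ m) {δ : ℝ} (hδ : 0 ≤ δ)
    (x y : Fin n → ℝ) :
    ∫⁻ z, decayWeight t (m + δ) y z * ‖f z‖ₑ ∂μ ≤
      ENNReal.ofReal C * decayWeight t (-m) x y * centeredMaximal μ f x *
        ENNReal.ofReal (2 ^ m) * ENNReal.ofReal (t ^ m) * dyadicSum δ := by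
  refine lintegral_decayWeight_mul_le hf ht (by linarith) fun r hr => ?_
  have hr0 : 0 < r := ht.trans_le hr
  have hd := dist_nonneg (x := x) (y := y)
  have hgrowth : (r + dist x y) ^ m ≤ (t / (t + dist x y)) ^ (-m) * r ^ m := by
    rw [Real.rpow_neg (by positivity), ← Real.inv_rpow (by positivity), inv_div,
      ← Real.mul_rpow (by positivity) hr0.le]
    refine Real.rpow_le_rpow (by positivity) ?_ hm
    rw [div_mul_eq_mul_div, le_div_iff₀ ht]
    nlinarith
  calc ∫⁻ z in ball y r, ‖f z‖ₑ ∂μ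
      ≤ ∫⁻ z in ball x (r + dist x y), ‖f z‖ₑ ∂μ :=
        lintegral_mono_set (ball_subset_ball' (by rw [dist_comm]))
    _ ≤ μ (ball x (r + dist x y)) * centeredMaximal μ f x :=
        setLIntegral_ball_le_measure_mul_centeredMaximal x (by positivity)
          ((hμ x _ (by positivity)).trans_lt ENNReal.ofReal_lt_top).ne
    _ ≤ ENNReal.ofReal C * ENNReal.ofReal ((r + dist x y) ^ m) * centeredMaximal μ f x := by
        rw [← ENNReal.ofReal_mul' (by positivity)]
        exact mul_le_mul_left (hμ x _ (by positivity)) _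
    _ ≤ ENNReal.ofReal C * (decayWeight t (-m) x y * ENNReal.ofReal (r ^ m)) *
          centeredMaximal μ f x := by
        gcongr
        rw [decayWeight, ← ENNReal.ofReal_mul (by positivity)]
        exact ENNReal.ofReal_le_ofReal hgrowth
    _ = _ := by ring

variable [SFinite μ] {α β : ℝ}

lemma lintegral_decayWeight_mul_lintegral_swap (hf : AEMeasurable (fun z => ‖f z‖ₑ) μ)
    (ht : 0 < t) (a b : ℝ) (x : Fin n → ℝ) :
    ∫⁻ y, decayWeight t a x y * ∫⁻ z, decayWeight t b y z * ‖f z‖ₑ ∂μ ∂μ =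
      ∫⁻ z, (∫⁻ y, decayWeight t a x y * decayWeight t b y z ∂μ) * ‖f z‖ₑ ∂μ := by
  have hF : AEMeasurable (Function.uncurry fun y z =>
      decayWeight t a x y * (decayWeight t b y z * ‖f z‖ₑ)) (μ.prod μ) :=
    ((continuous_decayWeight_right ht a x).measurable.comp measurable_fst).aemeasurable.mul
      ((continuous_decayWeight ht b).measurable.aemeasurable.mul hf.comp_snd)
  calc ∫⁻ y, decayWeight t a x y * ∫⁻ z, decayWeight t b y z * ‖f z‖ₑ ∂μ ∂μ
      = ∫⁻ y, ∫⁻ z, decayWeight t a x y * (decayWeight t b y z * ‖f z‖ₑ) ∂μ ∂μ := by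
        congr 1 with y
        exact (lintegral_const_mul' _ _ (decayWeight_ne_top _ _ _ _)).symm
    _ = ∫⁻ z, ∫⁻ y, decayWeight t a x y * (decayWeight t b y z * ‖f z‖ₑ) ∂μ ∂μ :=
        lintegral_lintegral_swap hF
    _ = _ := by
        congr 1 with z
        simp_rw [← mul_assoc]
        exact lintegral_mul_const' _ _ enorm_ne_top

def squareConst (C m α β : ℝ) : ℝ≥0∞ :=
  ENNReal.ofReal (2 ^ (m + α)) * (ENNReal.ofReal C * ENNReal.ofReal (2 ^ m)) ^ 3 *
    dyadicSum α ^ 2 * (dyadicSum α + dyadicSum β)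

lemma squareConst_ne_top (C m : ℝ) (hα : 0 < α) (hβ : 0 < β) : squareConst C m α β ≠ ∞ := by
  have := dyadicSum_ne_top hα
  have := dyadicSum_ne_top hβ
  unfold squareConst
  finiteness

lemma lintegral_decayWeight_mul_sq_le
    (hμ : ∀ (c : Fin n → ℝ) (r : ℝ), 0 < r → μ (ball c r) ≤ ENNReal.ofReal (C * r ^ m))
    (hf : AEMeasurable (fun z => ‖f z‖ₑ) μ) (ht : 0 < t) (hm : 0 ≤ m) (hα : 0 ≤ α)
    (hαβ : α ≤ β) (x : Fin n → ℝ) :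
    ∫⁻ y, decayWeight t (2 * m + β) x y * (∫⁻ z, decayWeight t (m + α) y z * ‖f z‖ₑ ∂μ) ^ 2 ∂μ ≤
      squareConst C m α β * ENNReal.ofReal (t ^ m) ^ 3 * centeredMaximal μ f x ^ 2 := by
  set M := centeredMaximal μ f x
  set T := ENNReal.ofReal (t ^ m)
  set Θ := fun y => ∫⁻ z, decayWeight t (m + α) y z * ‖f z‖ₑ ∂μ
  have hΘ : AEMeasurable Θ μ :=
    ((continuous_decayWeight ht _).measurable.aemeasurable.mul hf.comp_snd).lintegral_prod_right
  have hbound := lintegral_decayWeight_mul_enorm_le_centeredMaximal hμ hf ht hm hα x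
  set K := ENNReal.ofReal C * M * ENNReal.ofReal (2 ^ m) * T * dyadicSum α
  have hpt : ∀ y, decayWeight t (2 * m + β) x y * Θ y ^ 2 ≤
      K * (decayWeight t (m + β) x y * Θ y) := fun y => by
    have hw : decayWeight t (2 * m + β) x y * decayWeight t (-m) x y =
        decayWeight t (m + β) x y := by
      rw [decayWeight_mul ht]; congr 1; ring
    calc decayWeight t (2 * m + β) x y * Θ y ^ 2 = decayWeight t (2 * m + β) x y * Θ y * Θ y := by
          ring
      _ ≤ decayWeight t (2 * m + β) x y * (ENNReal.ofReal C * decayWeight t (-m) x y * M *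
            ENNReal.ofReal (2 ^ m) * T * dyadicSum α) * Θ y := by
          gcongr; exact hbound y
      _ = _ := by rw [← hw]; ring
  have hΘx : AEMeasurable (fun y => decayWeight t (m + β) x y * Θ y) μ :=
    (continuous_decayWeight_right ht _ x).measurable.aemeasurable.mul hΘ
  have hfx : AEMeasurable (fun z => decayWeight t (m + α) x z * ‖f z‖ₑ) μ :=
    (continuous_decayWeight_right ht _ x).measurable.aemeasurable.mul hf
  set L := ENNReal.ofReal (2 ^ (m + α)) *
    (ENNReal.ofReal C * ENNReal.ofReal (2 ^ m) * T * (dyadicSum α + dyadicSum β))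
  calc ∫⁻ y, decayWeight t (2 * m + β) x y * Θ y ^ 2 ∂μ
      ≤ ∫⁻ y, K * (decayWeight t (m + β) x y * Θ y) ∂μ := lintegral_mono hpt
    _ = K * ∫⁻ z, (∫⁻ y, decayWeight t (m + β) x y * decayWeight t (m + α) y z ∂μ) * ‖f z‖ₑ ∂μ := by
      rw [lintegral_const_mul'' _ hΘx, lintegral_decayWeight_mul_lintegral_swap hf ht]
    _ ≤ K * ∫⁻ z, L * decayWeight t (m + α) x z * ‖f z‖ₑ ∂μ := by
      gcongr with z
      exact lintegral_decayWeight_mul_decayWeight_le hμ ht (by linarith) hαβ x z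
    _ = K * (L * Θ x) := by
      rw [← lintegral_const_mul'' _ hfx]
      simp only [mul_assoc]
    _ ≤ K * (L * (ENNReal.ofReal C * decayWeight t (-m) x x * M * ENNReal.ofReal (2 ^ m) * T *
          dyadicSum α)) := by
      gcongr
      exact hbound x
    _ = squareConst C m α β * T ^ 3 * M ^ 2 := by
      rw [decayWeight_self ht.ne', squareConst]; ring

lemma lintegral_decayWeight_mul_enorm_integral_sq_le {s : (Fin n → ℝ) → (Fin n → ℝ) → ℂ}
    (hμ : ∀ (c : Fin n → ℝ) (r : ℝ), 0 < r → μ (ball c r) ≤ ENNReal.ofReal (C * r ^ m))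
    (hs : ∀ y z, ‖s y z‖ ≤ C * t ^ α / (t + dist y z) ^ (m + α))
    (hf : AEMeasurable (fun z => ‖f z‖ₑ) μ) (ht : 0 < t) (hm : 0 ≤ m) (hα : 0 ≤ α)
    (hαβ : α ≤ β) (x : Fin n → ℝ) :
    (∫⁻ y, decayWeight t (2 * m + β) x y * ‖∫ z, s y z * f z ∂μ‖ₑ ^ 2 ∂μ) *
        (ENNReal.ofReal (t ^ m))⁻¹ ≤
      ENNReal.ofReal C ^ 2 * squareConst C m α β * centeredMaximal μ f x ^ 2 := by
  set T := ENNReal.ofReal (t ^ m)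
  have hT : T ≠ 0 := (ENNReal.ofReal_pos.2 (by positivity)).ne'
  calc (∫⁻ y, decayWeight t (2 * m + β) x y * ‖∫ z, s y z * f z ∂μ‖ₑ ^ 2 ∂μ) * T⁻¹
      ≤ (∫⁻ y, (ENNReal.ofReal C / T) ^ 2 * (decayWeight t (2 * m + β) x y *
          (∫⁻ z, decayWeight t (m + α) y z * ‖f z‖ₑ ∂μ) ^ 2) ∂μ) * T⁻¹ := by
        refine mul_le_mul_left (lintegral_mono fun y => ?_) _
        rw [mul_left_comm, ← mul_pow]
        gcongr
        exact enorm_integral_mul_le_of_norm_le ht hs y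
    _ ≤ (ENNReal.ofReal C / T) ^ 2 * (squareConst C m α β * T ^ 3 * centeredMaximal μ f x ^ 2) *
          T⁻¹ := by
        rw [lintegral_const_mul' _ _
          (ENNReal.pow_ne_top (ENNReal.div_ne_top ENNReal.ofReal_ne_top hT))]
        gcongr
        exact lintegral_decayWeight_mul_sq_le hμ hf ht hm hα hαβ x
    _ = ENNReal.ofReal C ^ 2 * squareConst C m α β * centeredMaximal μ f x ^ 2 * (T⁻¹ * T) ^ 3 := by
        rw [div_eq_mul_inv]; ring
    _ = _ := by rw [ENNReal.inv_mul_cancel hT ENNReal.ofReal_ne_top, one_pow, mul_one]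

end Maximal

lemma exists_pos_rpow_half_le {K : ℝ≥0∞} (hK : K ≠ ∞) :
    ∃ C' : ℝ, 0 < C' ∧ ∀ a M : ℝ≥0∞, a ≤ K * M ^ 2 → a ^ (1 / 2 : ℝ) ≤ ENNReal.ofReal C' * M := by
  have hK' : K ^ (1 / 2 : ℝ) ≠ ∞ := ENNReal.rpow_ne_top_of_nonneg (by norm_num) hK
  refine ⟨(K ^ (1 / 2 : ℝ)).toReal + 1, by positivity, fun a M h => ?_⟩
  calc a ^ (1 / 2 : ℝ) ≤ (K * M ^ 2) ^ (1 / 2 : ℝ) := ENNReal.rpow_le_rpow h (by norm_num)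
    _ = K ^ (1 / 2 : ℝ) * M := by
      rw [ENNReal.mul_rpow_of_nonneg _ _ (by norm_num),
        show (1 / 2 : ℝ) = ((2 : ℕ) : ℝ)⁻¹ by norm_num, ENNReal.pow_rpow_inv_natCast two_ne_zero]
    _ ≤ ENNReal.ofReal ((K ^ (1 / 2 : ℝ)).toReal + 1) * M := by
      gcongr
      exact (ENNReal.le_ofReal_iff_toReal_le hK' (by positivity)).2 (by linarith)

theorem square_integrand_le_maximal_general (n : ℕ) (μ : Measure (Fin n → ℝ))
    (m α lam C : ℝ) (hm : 0 < m)
    (hα0 : 0 < α) (hα : α ≤ m * (lam - 2) / 2)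
    (hμ : ∀ (x : Fin n → ℝ) (r : ℝ), 0 < r →
      μ (Metric.ball x r) ≤ ENNReal.ofReal (C * r ^ m))
    (s : ℝ → (Fin n → ℝ) → (Fin n → ℝ) → ℂ)
    (hs : ∀ (t : ℝ) (x y : Fin n → ℝ), 0 < t →
      ‖s t x y‖ ≤ C * t ^ α / (t + ‖x - y‖) ^ (m + α)) :
    ∃ C' : ℝ, 0 < C' ∧ ∀ (f : (Fin n → ℝ) → ℂ), LocallyIntegrable f μ →
      (∀ (t : ℝ) (y : Fin n → ℝ), 0 < t → Integrable (fun z => s t y z * f z) μ) →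
      ∀ (x : Fin n → ℝ) (t : ℝ), 0 < t →
        ((∫⁻ y, ENNReal.ofReal ((t / (t + ‖x - y‖)) ^ (m * lam)) *
            (‖∫ z, s t y z * f z ∂μ‖₊ : ℝ≥0∞) ^ 2 ∂μ) *
          (ENNReal.ofReal (t ^ m))⁻¹) ^ (1 / 2 : ℝ) ≤
          ENNReal.ofReal C' * centeredMaximal μ f x := by
  have : IsLocallyFiniteMeasure μ := ⟨fun x =>
    ⟨ball x 1, ball_mem_nhds x one_pos, (hμ x 1 one_pos).trans_lt ENNReal.ofReal_lt_top⟩⟩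
  have hαβ : α ≤ m * (lam - 2) := by linarith
  obtain ⟨C', hC', hC'_le⟩ := exists_pos_rpow_half_le
    (ENNReal.mul_ne_top (ENNReal.pow_ne_top ENNReal.ofReal_ne_top)
      (squareConst_ne_top C m hα0 (hα0.trans_le hαβ)))
  refine ⟨C', hC', fun f hf _ x t ht => hC'_le _ _ ?_⟩
  have hweight : ∀ y, ENNReal.ofReal ((t / (t + ‖x - y‖)) ^ (m * lam)) =
      decayWeight t (2 * m + m * (lam - 2)) x y := fun y => by
    rw [decayWeight, dist_eq_norm]; ring_nf
  simp_rw [hweight]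
  exact lintegral_decayWeight_mul_enorm_integral_sq_le hμ
    (fun y z => by simpa only [dist_eq_norm] using hs t y z ht) hf.aestronglyMeasurable.enorm ht
    hm.le hα0.le hαβ x

/-- Pointwise bound of the localized `g_λ^*`-integrand by the maximal function:
if `μ(B(x,r)) ≲ r^m`, `λ > 2`, `0 < α ≤ m(λ−2)/2` and the kernel `s_t` satisfies the
size condition, then
`(∫ (t/(t+|x−y|))^{mλ} |θ_t f(y)|² dμ(y)/t^m)^{1/2} ≲ M_μ f(x)`. -/
theorem square_integrand_le_maximal (n : ℕ) (μ : Measure (Fin n → ℝ))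
    (m α lam C : ℝ) (hm : 0 < m) (hlam : 2 < lam)
    (hα0 : 0 < α) (hα : α ≤ m * (lam - 2) / 2) (hC : 0 < C)
    (hμ : ∀ (x : Fin n → ℝ) (r : ℝ), 0 < r →
      μ (Metric.ball x r) ≤ ENNReal.ofReal (C * r ^ m))
    (s : ℝ → (Fin n → ℝ) → (Fin n → ℝ) → ℂ)
    (hs : ∀ (t : ℝ) (x y : Fin n → ℝ), 0 < t →
      ‖s t x y‖ ≤ C * t ^ α / (t + ‖x - y‖) ^ (m + α)) :
    ∃ C' : ℝ, 0 < C' ∧ ∀ (f : (Fin n → ℝ) → ℂ), LocallyIntegrable f μ →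
      (∀ (t : ℝ) (y : Fin n → ℝ), 0 < t → Integrable (fun z => s t y z * f z) μ) →
      ∀ (x : Fin n → ℝ) (t : ℝ), 0 < t →
        ((∫⁻ y, ENNReal.ofReal ((t / (t + ‖x - y‖)) ^ (m * lam)) *
            (‖∫ z, s t y z * f z ∂μ‖₊ : ℝ≥0∞) ^ 2 ∂μ) *
          (ENNReal.ofReal (t ^ m))⁻¹) ^ (1 / 2 : ℝ) ≤
          ENNReal.ofReal C' * centeredMaximal μ f x :=
  square_integrand_le_maximal_general n μ m α lam C hm hα0 hα hμ s hs
end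
end
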